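/- The displacement field u(x,y) = (b/(2π))·( −xy/(2(1−ν)(x²+y²)), (1/(4(1−ν)))·[(x²−y²)/(x²+y²) + (1−2ν)·log(x²+y²)], 0 ) has total strain E_t = (∇u + (∇u)ᵀ)/2 whose difference from the edge-dislocation plastic strain E_p^E (with entries E₁₁ = −(b/(2π))y/(x²+y²), E₁₂ = E₂₁ = (b/(4π))x/(x²+y²), others zero) equals the elastic strain E_e^E given by E_e^E = (b/(4π(1−ν))) · [[ y((3−2ν)x²+(1−2ν)y²)/(x²+y²)², x(y²−x²)/(x²+y²)², 0], [x(y²−x²)/(x²+y²)², (−(1+2ν)x²y+(1−2ν)y³)/(x²+y²)², 0], [0,0,0]] at every (x,y) ≠ (0,0). -/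

import Mathlib

/-!
In units of `b / (4π(1 - ν))` the displacement is
`(-xy/r², ((x² - y²)/r² + (1 - 2ν) log r²)/2, 0)` with `r² = x² + y²`, so its gradient follows
from the quotient and chain rules applied to `xy/r²`, `(x² - y²)/r²` and `log r²`, all smooth off
the dislocation line. Symmetrizing and subtracting the plastic strain is then a rational identity
in `x, y, ν`; it needs `ν ≠ 1` because the plastic strain carries no factor `1/(1 - ν)`.
-/

open Matrix Real

section PlaneCoordinates

variable {s t : ℝ}

theorem sq_add_sq_ne_zero_of_ne_zero {x y : ℝ} (h : (x, y) ≠ (0, 0)) : x ^ 2 + y ^ 2 ≠ 0 := by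
  contrapose! h
  rw [sq, sq] at h
  obtain ⟨rfl, rfl⟩ := mul_self_add_mul_self_eq_zero.1 h
  rfl

theorem hasDerivAt_sq_add_sq : HasDerivAt (fun t => t ^ 2 + s ^ 2) (2 * t) t := by
  simpa using (hasDerivAt_pow 2 t).add_const (s ^ 2)

theorem hasDerivAt_mul_div_sq_add_sq (h : t ^ 2 + s ^ 2 ≠ 0) :
    HasDerivAt (fun t => t * s / (t ^ 2 + s ^ 2))
      (s * (s ^ 2 - t ^ 2) / (t ^ 2 + s ^ 2) ^ 2) t :=
  (((hasDerivAt_id' t).mul_const s).div hasDerivAt_sq_add_sq h).congr_deriv (by ring)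

theorem hasDerivAt_sub_sq_div_add_sq (h : t ^ 2 + s ^ 2 ≠ 0) :
    HasDerivAt (fun t => (t ^ 2 - s ^ 2) / (t ^ 2 + s ^ 2))
      (4 * t * s ^ 2 / (t ^ 2 + s ^ 2) ^ 2) t :=
  (((hasDerivAt_pow 2 t).sub_const (s ^ 2)).div hasDerivAt_sq_add_sq h).congr_deriv (by ring)

theorem hasDerivAt_log_sq_add_sq (h : t ^ 2 + s ^ 2 ≠ 0) :
    HasDerivAt (fun t => log (t ^ 2 + s ^ 2)) (2 * t / (t ^ 2 + s ^ 2)) t :=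
  hasDerivAt_sq_add_sq.log h

theorem hasDerivAt_mul_div_sq_add_sq_right (h : s ^ 2 + t ^ 2 ≠ 0) :
    HasDerivAt (fun t => s * t / (s ^ 2 + t ^ 2))
      (s * (s ^ 2 - t ^ 2) / (s ^ 2 + t ^ 2) ^ 2) t := by
  rw [add_comm] at h
  simpa only [mul_comm s, add_comm (s ^ 2)] using hasDerivAt_mul_div_sq_add_sq h

theorem hasDerivAt_sub_sq_div_add_sq_right (h : s ^ 2 + t ^ 2 ≠ 0) :
    HasDerivAt (fun t => (s ^ 2 - t ^ 2) / (s ^ 2 + t ^ 2))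
      (-(4 * t * s ^ 2) / (s ^ 2 + t ^ 2) ^ 2) t := by
  rw [add_comm] at h
  simpa only [Pi.neg_def, ← neg_div, neg_sub, add_comm (s ^ 2)] using
    (hasDerivAt_sub_sq_div_add_sq h).neg

theorem hasDerivAt_log_sq_add_sq_right (h : s ^ 2 + t ^ 2 ≠ 0) :
    HasDerivAt (fun t => log (s ^ 2 + t ^ 2)) (2 * t / (s ^ 2 + t ^ 2)) t := by
  rw [add_comm] at h
  simpa only [add_comm (s ^ 2)] using hasDerivAt_log_sq_add_sq h

end PlaneCoordinates

noncomputable section EdgeDislocation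

variable (b ν x y : ℝ)

/-- The edge-dislocation displacement in units of `b / (4π(1 - ν))`. -/
def edgeDisplacement : Fin 3 → ℝ :=
  ![-(x * y / (x ^ 2 + y ^ 2)),
    ((x ^ 2 - y ^ 2) / (x ^ 2 + y ^ 2) + (1 - 2 * ν) * log (x ^ 2 + y ^ 2)) / 2,
    0]

def edgeDisplacementGrad : Matrix (Fin 3) (Fin 3) ℝ :=
  !![-(y * (y ^ 2 - x ^ 2) / (x ^ 2 + y ^ 2) ^ 2), -(x * (x ^ 2 - y ^ 2) / (x ^ 2 + y ^ 2) ^ 2), 0;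
     (4 * x * y ^ 2 / (x ^ 2 + y ^ 2) ^ 2 + (1 - 2 * ν) * (2 * x / (x ^ 2 + y ^ 2))) / 2,
       (-(4 * y * x ^ 2) / (x ^ 2 + y ^ 2) ^ 2 + (1 - 2 * ν) * (2 * y / (x ^ 2 + y ^ 2))) / 2, 0;
     0, 0, 0]

def edgePlasticStrain : Matrix (Fin 3) (Fin 3) ℝ :=
  !![-(b / (2 * π)) * y / (x ^ 2 + y ^ 2), (b / (4 * π)) * x / (x ^ 2 + y ^ 2), 0;
     (b / (4 * π)) * x / (x ^ 2 + y ^ 2), 0, 0;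
     0, 0, 0]

def edgeElasticStrain : Matrix (Fin 3) (Fin 3) ℝ :=
  (b / (4 * π * (1 - ν))) •
    !![y * ((3 - 2 * ν) * x ^ 2 + (1 - 2 * ν) * y ^ 2) / (x ^ 2 + y ^ 2) ^ 2,
         x * (y ^ 2 - x ^ 2) / (x ^ 2 + y ^ 2) ^ 2, 0;
       x * (y ^ 2 - x ^ 2) / (x ^ 2 + y ^ 2) ^ 2,
         (-(1 + 2 * ν) * x ^ 2 * y + (1 - 2 * ν) * y ^ 3) / (x ^ 2 + y ^ 2) ^ 2, 0;
       0, 0, 0]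

variable {b ν x y}

theorem hasDerivAt_edgeDisplacement_fst (h : x ^ 2 + y ^ 2 ≠ 0) (i : Fin 3) :
    HasDerivAt (fun t => edgeDisplacement ν t y i) (edgeDisplacementGrad ν x y i 0) x := by
  fin_cases i
  · exact (hasDerivAt_mul_div_sq_add_sq h).neg
  · exact ((hasDerivAt_sub_sq_div_add_sq h).add
      ((hasDerivAt_log_sq_add_sq h).const_mul _)).div_const 2
  · exact hasDerivAt_const x 0

theorem hasDerivAt_edgeDisplacement_snd (h : x ^ 2 + y ^ 2 ≠ 0) (i : Fin 3) :
    HasDerivAt (fun t => edgeDisplacement ν x t i) (edgeDisplacementGrad ν x y i 1) y := by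
  fin_cases i
  · exact (hasDerivAt_mul_div_sq_add_sq_right h).neg
  · exact ((hasDerivAt_sub_sq_div_add_sq_right h).add
      ((hasDerivAt_log_sq_add_sq_right h).const_mul _)).div_const 2
  · exact hasDerivAt_const y 0


theorem edgeDisplacementGrad_apply_two (i : Fin 3) : edgeDisplacementGrad ν x y i 2 = 0 := by
  fin_cases i <;> rfl

theorem symm_smul_edgeDisplacementGrad_sub_edgePlasticStrain (hν : ν ≠ 1)
    (h : x ^ 2 + y ^ 2 ≠ 0) :
    let G := (b / (4 * π * (1 - ν))) • edgeDisplacementGrad ν x y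
    (1 / 2 : ℝ) • (G + Gᵀ) - edgePlasticStrain b x y = edgeElasticStrain b ν x y := by
  have hν' : 1 - ν ≠ 0 := sub_ne_zero.2 hν.symm
  ext i j
  fin_cases i <;> fin_cases j <;>
    simp only [edgeDisplacementGrad, edgePlasticStrain, edgeElasticStrain, Matrix.sub_apply,
      Matrix.add_apply, Matrix.smul_apply, transpose_apply, of_apply, cons_val', cons_val_zero,
      cons_val_one, cons_val, cons_val_fin_one, Fin.zero_eta, Fin.mk_one, Fin.reduceFinMk,
      smul_eq_mul] <;> field_simp <;> ring

end EdgeDislocation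

/-- The total strain of the edge-dislocation displacement field u minus the
plastic strain E_p^E equals the elastic strain E_e^E at every (x,y) ≠ (0,0). -/
theorem edge_elastic_strain (b ν : ℝ) (hν : ν ≠ 1)
    (u : ℝ → ℝ → ℝ → Fin 3 → ℝ)
    (hu : ∀ x y z : ℝ, u x y z =
      ![b / (2 * Real.pi) * (-(x * y) / (2 * (1 - ν) * (x ^ 2 + y ^ 2))),
        b / (2 * Real.pi) * ((1 / (4 * (1 - ν))) *
          ((x ^ 2 - y ^ 2) / (x ^ 2 + y ^ 2) + (1 - 2 * ν) * Real.log (x ^ 2 + y ^ 2))),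
        0])
    (x y z : ℝ) (h : (x, y) ≠ (0, 0)) :
    let G : Matrix (Fin 3) (Fin 3) ℝ := fun i j =>
      ![deriv (fun x' => u x' y z i) x,
        deriv (fun y' => u x y' z i) y,
        deriv (fun z' => u x y z' i) z] j
    let Et : Matrix (Fin 3) (Fin 3) ℝ := (1 / 2 : ℝ) • (G + Gᵀ)
    let Ep : Matrix (Fin 3) (Fin 3) ℝ :=
      !![-(b / (2 * Real.pi)) * y / (x ^ 2 + y ^ 2),
           (b / (4 * Real.pi)) * x / (x ^ 2 + y ^ 2), 0;
         (b / (4 * Real.pi)) * x / (x ^ 2 + y ^ 2), 0, 0;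
         0, 0, 0]
    Et - Ep =
      (b / (4 * Real.pi * (1 - ν))) •
        !![y * ((3 - 2 * ν) * x ^ 2 + (1 - 2 * ν) * y ^ 2) / (x ^ 2 + y ^ 2) ^ 2,
             x * (y ^ 2 - x ^ 2) / (x ^ 2 + y ^ 2) ^ 2, 0;
           x * (y ^ 2 - x ^ 2) / (x ^ 2 + y ^ 2) ^ 2,
             (-(1 + 2 * ν) * x ^ 2 * y + (1 - 2 * ν) * y ^ 3) / (x ^ 2 + y ^ 2) ^ 2, 0;
           0, 0, 0] := by
  intro G Et Ep
  have hr := sq_add_sq_ne_zero_of_ne_zero h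
  set k := b / (4 * π * (1 - ν))
  have hν' : 1 - ν ≠ 0 := sub_ne_zero.2 hν.symm
  have hu_scaled : ∀ x y z, u x y z = k • edgeDisplacement ν x y := by
    intro x y z
    ext i
    fin_cases i <;> simp only [hu, edgeDisplacement, Pi.smul_apply, smul_eq_mul, cons_val_zero,
      cons_val_one, cons_val, Fin.zero_eta, Fin.mk_one, Fin.reduceFinMk, k] <;> field_simp <;> ring
  have hG : G = k • edgeDisplacementGrad ν x y := by
    ext i j
    fin_cases j <;> simp only [G, hu_scaled]
    · exact ((hasDerivAt_edgeDisplacement_fst hr i).const_mul k).deriv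
    · exact ((hasDerivAt_edgeDisplacement_snd hr i).const_mul k).deriv
    · simp [edgeDisplacementGrad_apply_two]
  show (1 / 2 : ℝ) • (G + Gᵀ) - edgePlasticStrain b x y = edgeElasticStrain b ν x y
  rw [hG]
  exact symm_smul_edgeDisplacementGrad_sub_edgePlasticStrain hν hr
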